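/- arXiv:2102.07158 — 2 statements merged into one kernel-verified Lean document; each statement's English description precedes it below -/
import Mathlib

section
/- (Global convergence of CNL, convex case.) Assume P is convex with a minimizer x*, and R_x := sup{ ‖x − x*‖ : P(x) ≤ P(x^0) } < ∞. Let (x^k)_{k≥0} in ℝ^d and reals h_{ij}^k with |h_{ij}^k| ≤ γ (for all i, j, k) satisfy: x^{k+1} = x^k + s^k, where s^k is a global minimizer of s ↦ T(x^k, s) := ⟨∇P(x^k), s⟩ + (1/2)⟨(H^k + λI)s, s⟩ + (M/6)‖s‖³, with M = νR³, β^k = max_{i,j} (h_{ij}(x^k) + 2γ)/(h_{ij}^k + 2γ), and H^k = (1/(nm)) Σ_{i,j} [ β^k (h_{ij}^k + 2γ) − 2γ ] a_{ij} a_{ij}ᵀ. Then for all k ≥ 1: P(x^k) − P(x*) ≤ 81γR²R_x²/k + 9MR_x³/k² + 4(P(x^0) − P(x*))/k³. -/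
/-! Along a segment `x + t • s`, each `φ_ij(⟨a_ij, ·⟩)` has second derivative that is
`ν ‖a_ij‖³ ‖s‖`-Lipschitz in `t`, so `P` agrees with its second-order Taylor expansion up to
`(M/6) ‖s‖³`, `M = ν R³`. The rescaled curvatures `β_k (h_ij^k + 2γ) - 2γ` dominate the true ones
`h_ij(x^k)` and, since `β_k ≤ 3`, exceed them by at most `8γ`. Hence the cubic model is an upper
bound for `P(x^k + ·) - P(x^k)` that overshoots by at most `4γR² ‖s‖² + (M/3) ‖s‖³`, and
minimality of `s^k` gives `P(x^{k+1}) ≤ P(x^k + s) + 4γR² ‖s‖² + (M/3) ‖s‖³` for every `s`.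
With `s = 0` the iterates stay in the initial sublevel set; with `s = t (x* - x^k)` and
convexity, `δ_{k+1} ≤ (1 - t) δ_k + 4γR²R_x² t² + (M R_x³/3) t³` for `δ_k = P(x^k) - P(x*)`,
and `t = 3/(k+1)` turns this recursion into the stated rate. -/

open MeasureTheory Filter
open scoped BigOperators

noncomputable section

abbrev Euc (d : ℕ) := EuclideanSpace ℝ (Fin d)

/-- Real inner product on Euclidean space. -/
def rinner {d : ℕ} (a x : Euc d) : ℝ := inner ℝ a x

/-- The rank-one matrix `a aᵀ`. -/
def outerMat {d : ℕ} (a : Euc d) : Matrix (Fin d) (Fin d) ℝ := fun p q => a p * a q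

/-- `(1/(nm)) ∑_{ij} c_{ij} a_{ij} a_{ij}ᵀ`. -/
def Hmat {n m d : ℕ} (a : Fin n → Fin m → Euc d) (c : Fin n → Fin m → ℝ) :
    Matrix (Fin d) (Fin d) ℝ :=
  ((n : ℝ) * m)⁻¹ • ∑ i, ∑ j, c i j • outerMat (a i j)

/-- Matrix-vector multiplication as a map on Euclidean space. -/
def mulVecE {d : ℕ} (M : Matrix (Fin d) (Fin d) ℝ) (v : Euc d) : Euc d := WithLp.toLp 2 (M.mulVec v)

/-- The vector `h_i(y) = (φ''_{i1}(⟨a_{i1},y⟩), …, φ''_{im}(⟨a_{im},y⟩)) ∈ ℝ^m`. -/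
def hvecOf {n m d : ℕ} (a : Fin n → Fin m → Euc d) (φ'' : Fin n → Fin m → ℝ → ℝ)
    (i : Fin n) (y : Euc d) : Euc m :=
  WithLp.toLp 2 (fun j => φ'' i j (rinner (a i j) y))

/-- Componentwise positive part on ℝ^m. -/
def posPartE {m : ℕ} (v : Euc m) : Euc m := WithLp.toLp 2 (fun j => max (v j) 0)

/-- The cubically regularized model `T(x,s)` built from the Hessian estimator `Hmat a c + λ I`,
gradient `gP` and cubic coefficient `Mc`. -/
def cubicModel {n m d : ℕ} (a : Fin n → Fin m → Euc d) (gP : Euc d)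
    (c : Fin n → Fin m → ℝ) (lam Mc : ℝ) (s : Euc d) : ℝ :=
  rinner gP s +
    1 / 2 * rinner (mulVecE (Hmat a c + lam • (1 : Matrix (Fin d) (Fin d) ℝ)) s) s +
    Mc / 6 * ‖s‖ ^ 3

open Set

variable {n m d : ℕ}

lemma abs_le_of_abs_deriv_le_mul_pow {f f' : ℝ → ℝ} {C b : ℝ} (k : ℕ)
    (hf : ∀ t, HasDerivAt f (f' t) t) (h0 : f 0 = 0)
    (hbound : ∀ t ∈ Icc 0 b, |f' t| ≤ C * t ^ k) :
    ∀ t ∈ Icc 0 b, |f t| ≤ C * t ^ (k + 1) / (k + 1) := by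
  have hB : ∀ t, HasDerivAt (fun t => C * t ^ (k + 1) / (k + 1)) (C * t ^ k) t := fun t =>
    (((hasDerivAt_pow (k + 1) t).const_mul C).div_const ((k : ℝ) + 1)).congr_deriv (by
      push_cast
      field_simp)
  exact image_norm_le_of_norm_deriv_right_le_deriv_boundary
    (fun t _ => (hf t).continuousAt.continuousWithinAt) (fun t _ => (hf t).hasDerivWithinAt)
    (by simp [h0]) hB (fun t ht => hbound t (Ico_subset_Icc_self ht))

lemma abs_taylor_remainder_two_le {g g₁ g₂ : ℝ → ℝ} {L : ℝ}
    (hg : ∀ t, HasDerivAt g (g₁ t) t) (hg₁ : ∀ t, HasDerivAt g₁ (g₂ t) t)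
    (hL : ∀ t ∈ Icc (0 : ℝ) 1, |g₂ t - g₂ 0| ≤ L * t) :
    |g 1 - g 0 - g₁ 0 - g₂ 0 / 2| ≤ L / 6 := by
  have hF₁ := abs_le_of_abs_deriv_le_mul_pow (f := fun t => g₁ t - g₁ 0 - t * g₂ 0)
    (f' := fun t => g₂ t - g₂ 0) 1
    (fun t => (((hg₁ t).sub_const (g₁ 0)).sub ((hasDerivAt_id t).mul_const (g₂ 0))).congr_deriv
      (by simp)) (by simp) (by simpa using hL)
  have hF := abs_le_of_abs_deriv_le_mul_pow
    (f := fun t => g t - g 0 - t * g₁ 0 - t ^ 2 / 2 * g₂ 0)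
    (f' := fun t => g₁ t - g₁ 0 - t * g₂ 0) (C := L / 2) 2
    (fun t => ((((hg t).sub_const (g 0)).sub ((hasDerivAt_id t).mul_const (g₁ 0))).sub
        (((hasDerivAt_pow 2 t).div_const 2).mul_const (g₂ 0))).congr_deriv (by simp))
    (by simp) (fun t ht => (hF₁ t ht).trans_eq (by norm_num; ring))
  convert hF 1 (right_mem_Icc.2 zero_le_one) using 1
  · ring_nf
  · norm_num
    ring

lemma abs_taylor_remainder_two_le_of_lipschitz {φ : ℝ → ℝ} {ν : ℝ} (hφ : ContDiff ℝ 2 φ)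
    (hlip : ∀ s t, |deriv (deriv φ) s - deriv (deriv φ) t| ≤ ν * |s - t|) (α β : ℝ) :
    |φ (α + β) - φ α - deriv φ α * β - deriv (deriv φ) α * β ^ 2 / 2| ≤ ν * |β| ^ 3 / 6 := by
  have hd₁ : Differentiable ℝ φ := hφ.differentiable two_ne_zero
  have hd₂ : Differentiable ℝ (deriv φ) :=
    ((contDiff_succ_iff_deriv (n := 1)).mp hφ).2.2.differentiable one_ne_zero
  have hline : ∀ t, HasDerivAt (fun t => α + t * β) β t := fun t => by
    simpa using ((hasDerivAt_id t).mul_const β).const_add α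
  have h := abs_taylor_remainder_two_le (g := fun t => φ (α + t * β))
    (g₁ := fun t => deriv φ (α + t * β) * β) (g₂ := fun t => deriv (deriv φ) (α + t * β) * β ^ 2)
    (L := ν * |β| ^ 3) (fun t => ((hd₁ _).hasDerivAt.comp t (hline t)))
    (fun t => (((hd₂ _).hasDerivAt.comp t (hline t)).mul_const β).congr_deriv (by ring))
    (fun t ht => by
      calc |deriv (deriv φ) (α + t * β) * β ^ 2 - deriv (deriv φ) (α + 0 * β) * β ^ 2|
          = |deriv (deriv φ) (α + t * β) - deriv (deriv φ) (α + 0 * β)| * |β| ^ 2 := by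
            rw [← sub_mul, abs_mul, abs_pow]
        _ ≤ ν * |t * β| * |β| ^ 2 := by
            gcongr
            simpa using hlip (α + t * β) α
        _ = ν * |β| ^ 3 * t := by rw [abs_mul, abs_of_nonneg ht.1]; ring)
  simpa using h

lemma inv_mul_sum_sum_le {f : Fin n → Fin m → ℝ} {C : ℝ} (hC : 0 ≤ C) (hf : ∀ i j, f i j ≤ C) :
    ((n : ℝ) * m)⁻¹ * ∑ i, ∑ j, f i j ≤ C := by
  refine inv_mul_le_of_le_mul₀ (by positivity) hC ?_
  calc ∑ i, ∑ j, f i j ≤ ∑ _i : Fin n, ∑ _j : Fin m, C := by gcongr with i _ j _; exact hf i j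
    _ = (n : ℝ) * m * C := by simp [mul_assoc]

lemma abs_inv_mul_sum_sum_le {f : Fin n → Fin m → ℝ} {C : ℝ} (hC : 0 ≤ C)
    (hf : ∀ i j, |f i j| ≤ C) : |((n : ℝ) * m)⁻¹ * ∑ i, ∑ j, f i j| ≤ C := by
  rw [abs_mul, abs_of_nonneg (by positivity)]
  refine le_trans ?_ (inv_mul_sum_sum_le hC hf)
  gcongr
  exact (Finset.abs_sum_le_sum_abs _ _).trans (by gcongr; exact Finset.abs_sum_le_sum_abs _ _)

lemma mulVecE_add_smul_one (A : Matrix (Fin d) (Fin d) ℝ) (lam : ℝ) (s : Euc d) :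
    mulVecE (A + lam • (1 : Matrix (Fin d) (Fin d) ℝ)) s = mulVecE A s + lam • s := by
  ext p
  simp [mulVecE, Matrix.add_mulVec, Matrix.smul_mulVec]

lemma outerMat_mulVec (a s : Euc d) : (outerMat a).mulVec s = rinner a s • (a : Fin d → ℝ) := by
  ext p
  simp only [Matrix.mulVec, dotProduct, outerMat, rinner, PiLp.inner_apply, RCLike.inner_apply,
    conj_trivial, Pi.smul_apply, smul_eq_mul, Finset.sum_mul]
  exact Finset.sum_congr rfl fun q _ => by ring

lemma mulVecE_Hmat (a : Fin n → Fin m → Euc d) (c : Fin n → Fin m → ℝ) (s : Euc d) :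
    mulVecE (Hmat a c) s = ((n : ℝ) * m)⁻¹ • ∑ i, ∑ j, (c i j * rinner (a i j) s) • a i j := by
  ext p
  simp [mulVecE, Hmat, Matrix.smul_mulVec, Matrix.sum_mulVec, outerMat_mulVec, mul_assoc]

lemma rinner_mulVecE_Hmat (a : Fin n → Fin m → Euc d) (c : Fin n → Fin m → ℝ) (s : Euc d) :
    rinner (mulVecE (Hmat a c) s) s = ((n : ℝ) * m)⁻¹ * ∑ i, ∑ j, c i j * rinner (a i j) s ^ 2 := by
  simp only [rinner, mulVecE_Hmat, inner_smul_left, sum_inner]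
  simp [sq, mul_assoc, real_inner_comm]

lemma rinner_mulVecE_Hmat_add_smul_one (a : Fin n → Fin m → Euc d) (c : Fin n → Fin m → ℝ)
    (lam : ℝ) (s : Euc d) :
    rinner (mulVecE (Hmat a c + lam • (1 : Matrix (Fin d) (Fin d) ℝ)) s) s =
      ((n : ℝ) * m)⁻¹ * ∑ i, ∑ j, c i j * rinner (a i j) s ^ 2 + lam * ‖s‖ ^ 2 := by
  rw [mulVecE_add_smul_one, rinner, inner_add_left, ← rinner, rinner_mulVecE_Hmat,
    real_inner_smul_left, real_inner_self_eq_norm_sq]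

lemma abs_rinner_le_of_norm_le {a : Euc d} {R : ℝ} (ha : ‖a‖ ≤ R) (s : Euc d) :
    |rinner a s| ≤ R * ‖s‖ :=
  (abs_real_inner_le_norm _ _).trans (by gcongr)

lemma rinner_mulVecE_Hmat_add_smul_one_mono {a : Fin n → Fin m → Euc d}
    {c c' : Fin n → Fin m → ℝ} (hc : ∀ i j, c i j ≤ c' i j) (lam : ℝ) (s : Euc d) :
    rinner (mulVecE (Hmat a c + lam • 1) s) s ≤ rinner (mulVecE (Hmat a c' + lam • 1) s) s := by
  simp only [rinner_mulVecE_Hmat_add_smul_one]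
  gcongr with i _ j _
  exact hc i j

lemma rinner_mulVecE_Hmat_add_smul_one_sub_le {a : Fin n → Fin m → Euc d} {R K : ℝ}
    (hRub : ∀ i j, ‖a i j‖ ≤ R) {c c' : Fin n → Fin m → ℝ} (hK : 0 ≤ K)
    (hc : ∀ i j, c' i j ≤ c i j + K) (lam : ℝ) (s : Euc d) :
    rinner (mulVecE (Hmat a c' + lam • 1) s) s - rinner (mulVecE (Hmat a c + lam • 1) s) s
      ≤ K * (R * ‖s‖) ^ 2 := by
  simp only [rinner_mulVecE_Hmat_add_smul_one, add_sub_add_right_eq_sub, ← mul_sub,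
    ← Finset.sum_sub_distrib, ← sub_mul]
  refine inv_mul_sum_sum_le (by positivity) fun i j => ?_
  have hβ : rinner (a i j) s ^ 2 ≤ (R * ‖s‖) ^ 2 :=
    sq_le_sq' (abs_le.1 (abs_rinner_le_of_norm_le (hRub i j) s)).1
      (abs_le.1 (abs_rinner_le_of_norm_le (hRub i j) s)).2
  exact mul_le_mul (by linarith [hc i j]) hβ (sq_nonneg _) hK

section Objective

variable {a : Fin n → Fin m → Euc d} {φ : Fin n → Fin m → ℝ → ℝ} {lam : ℝ} {P : Euc d → ℝ}

lemma rinner_gradient (hφ : ∀ i j, Differentiable ℝ (φ i j))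
    (hP : ∀ y, P y = ((n : ℝ) * m)⁻¹ * (∑ i, ∑ j, φ i j (rinner (a i j) y)) + lam / 2 * ‖y‖ ^ 2)
    (y s : Euc d) :
    rinner (gradient P y) s = ((n : ℝ) * m)⁻¹ *
      ∑ i, ∑ j, deriv (φ i j) (rinner (a i j) y) * rinner (a i j) s + lam * rinner y s := by
  obtain rfl : P = _ := funext hP
  have hD : HasFDerivAt (fun y => ((n : ℝ) * m)⁻¹ * (∑ i, ∑ j, φ i j (rinner (a i j) y))
      + lam / 2 * ‖y‖ ^ 2) (((n : ℝ) * m)⁻¹ • ∑ i, ∑ j,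
        deriv (φ i j) (rinner (a i j) y) • innerSL ℝ (a i j) + (lam / 2) • (2 • innerSL ℝ y)) y :=
    ((HasFDerivAt.fun_sum fun i _ => HasFDerivAt.fun_sum fun j _ =>
        (hφ i j _).hasDerivAt.comp_hasFDerivAt y (innerSL ℝ (a i j)).hasFDerivAt).const_mul _).add
      ((hasStrictFDerivAt_norm_sq y).hasFDerivAt.const_mul _)
  rw [rinner, gradient, hD.fderiv, InnerProductSpace.toDual_symm_apply]
  simp only [rinner, add_apply, smul_apply,
    sum_apply, innerSL_apply_apply, smul_eq_mul, nsmul_eq_mul, Nat.cast_ofNat]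
  ring

lemma abs_objective_taylor_remainder_le {ν R : ℝ} (hν : 0 ≤ ν) (hR : 0 ≤ R)
    (hsmooth : ∀ i j, ContDiff ℝ 2 (φ i j))
    (hlip : ∀ i j s t,
      |deriv (deriv (φ i j)) s - deriv (deriv (φ i j)) t| ≤ ν * |s - t|)
    (hRub : ∀ i j, ‖a i j‖ ≤ R)
    (hP : ∀ y, P y = ((n : ℝ) * m)⁻¹ * (∑ i, ∑ j, φ i j (rinner (a i j) y)) + lam / 2 * ‖y‖ ^ 2)
    (x s : Euc d) :
    |P (x + s) - P x - rinner (gradient P x) s - rinner (mulVecE (Hmat a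
      (fun i j => deriv (deriv (φ i j)) (rinner (a i j) x)) + lam • 1) s) s / 2|
      ≤ ν * R ^ 3 * ‖s‖ ^ 3 / 6 := by
  have hsplit : ∀ i j, rinner (a i j) (x + s) = rinner (a i j) x + rinner (a i j) s := fun i j =>
    inner_add_right _ _ _
  have hnorm : ‖x + s‖ ^ 2 = ‖x‖ ^ 2 + 2 * rinner x s + ‖s‖ ^ 2 := norm_add_sq_real x s
  have hexpand : P (x + s) - P x - rinner (gradient P x) s - rinner (mulVecE (Hmat a
      (fun i j => deriv (deriv (φ i j)) (rinner (a i j) x)) + lam • 1) s) s / 2 =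
      ((n : ℝ) * m)⁻¹ * ∑ i, ∑ j, (φ i j (rinner (a i j) x + rinner (a i j) s)
        - φ i j (rinner (a i j) x) - deriv (φ i j) (rinner (a i j) x) * rinner (a i j) s
        - deriv (deriv (φ i j)) (rinner (a i j) x) * rinner (a i j) s ^ 2 / 2) := by
    rw [hP, hP, rinner_gradient (fun i j => (hsmooth i j).differentiable two_ne_zero) hP,
      rinner_mulVecE_Hmat_add_smul_one, hnorm]
    simp only [hsplit, Finset.sum_sub_distrib, ← Finset.sum_div]
    ring
  rw [hexpand]
  refine abs_inv_mul_sum_sum_le (by positivity) fun i j =>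
    (abs_taylor_remainder_two_le_of_lipschitz (hsmooth i j) (hlip i j) _ _).trans ?_
  calc ν * |rinner (a i j) s| ^ 3 / 6 ≤ ν * (R * ‖s‖) ^ 3 / 6 := by
        gcongr
        exact abs_rinner_le_of_norm_le (hRub i j) s
    _ = ν * R ^ 3 * ‖s‖ ^ 3 / 6 := by ring

end Objective

section CubicModel

variable {a : Fin n → Fin m → Euc d} {P : Euc d → ℝ} {x g : Euc d} {h c : Fin n → Fin m → ℝ}
  {lam M : ℝ}

lemma le_add_cubicModel
    (hT : ∀ s, |P (x + s) - P x - rinner g s - rinner (mulVecE (Hmat a h + lam • 1) s) s / 2|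
      ≤ M * ‖s‖ ^ 3 / 6)
    (hc : ∀ i j, h i j ≤ c i j) (s : Euc d) :
    P (x + s) ≤ P x + cubicModel a g c lam M s := by
  have := (abs_le.1 (hT s)).2
  have := rinner_mulVecE_Hmat_add_smul_one_mono (a := a) hc lam s
  rw [cubicModel]
  linarith

lemma add_cubicModel_le {R K : ℝ} (hRub : ∀ i j, ‖a i j‖ ≤ R) (hK : 0 ≤ K)
    (hT : ∀ s, |P (x + s) - P x - rinner g s - rinner (mulVecE (Hmat a h + lam • 1) s) s / 2|
      ≤ M * ‖s‖ ^ 3 / 6)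
    (hc : ∀ i j, c i j ≤ h i j + K) (s : Euc d) :
    P x + cubicModel a g c lam M s ≤ P (x + s) + K * R ^ 2 / 2 * ‖s‖ ^ 2 + M / 3 * ‖s‖ ^ 3 := by
  have := (abs_le.1 (hT s)).1
  have := rinner_mulVecE_Hmat_add_smul_one_sub_le hRub hK hc lam s
  rw [cubicModel]
  nlinarith

lemma le_add_of_cubicModel_le {R K : ℝ} (hRub : ∀ i j, ‖a i j‖ ≤ R) (hK : 0 ≤ K)
    (hT : ∀ s, |P (x + s) - P x - rinner g s - rinner (mulVecE (Hmat a h + lam • 1) s) s / 2|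
      ≤ M * ‖s‖ ^ 3 / 6)
    (hlo : ∀ i j, h i j ≤ c i j) (hhi : ∀ i j, c i j ≤ h i j + K) {y : Euc d}
    (hy : ∀ s, cubicModel a g c lam M (y - x) ≤ cubicModel a g c lam M s) (s : Euc d) :
    P y ≤ P (x + s) + K * R ^ 2 / 2 * ‖s‖ ^ 2 + M / 3 * ‖s‖ ^ 3 :=
  calc P y = P (x + (y - x)) := by rw [add_sub_cancel]
    _ ≤ P x + cubicModel a g c lam M (y - x) := le_add_cubicModel hT hlo _
    _ ≤ P x + cubicModel a g c lam M s := by gcongr; exact hy s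
    _ ≤ _ := add_cubicModel_le hRub hK hT hhi s

end CubicModel

lemma ConvexOn.sub_le_of_forall_le_add {E : Type*} [NormedAddCommGroup E] [NormedSpace ℝ E]
    {P : E → ℝ} (hP : ConvexOn ℝ univ P) {A C r : ℝ} (hA : 0 ≤ A) (hC : 0 ≤ C) {x y z : E}
    (hy : ∀ s, P y ≤ P (x + s) + A * ‖s‖ ^ 2 + C * ‖s‖ ^ 3) (hr : ‖z - x‖ ≤ r) {t : ℝ}
    (ht : t ∈ Icc (0 : ℝ) 1) :
    P y - P z ≤ (1 - t) * (P x - P z) + A * r ^ 2 * t ^ 2 + C * r ^ 3 * t ^ 3 := by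
  have hnorm : ‖t • (z - x)‖ ≤ t * r := by
    rw [norm_smul, Real.norm_of_nonneg ht.1]
    exact mul_le_mul_of_nonneg_left hr ht.1
  have hconv : P (x + t • (z - x)) ≤ (1 - t) * P x + t * P z := by
    have := hP.2 (mem_univ x) (mem_univ z) (sub_nonneg.2 ht.2) ht.1 (by ring)
    simpa [smul_sub, sub_smul, add_sub, add_comm] using this
  have h0 : 0 ≤ ‖t • (z - x)‖ := norm_nonneg _
  have := hy (t • (z - x))
  have : A * ‖t • (z - x)‖ ^ 2 ≤ A * (t * r) ^ 2 := by gcongr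
  have : C * ‖t • (z - x)‖ ^ 3 ≤ C * (t * r) ^ 3 := by gcongr
  nlinarith

lemma add_two_mul_div_add_two_mul_le_three {γ h c : ℝ} (hγ : 0 < γ) (hh : |h| ≤ γ)
    (hc : |c| ≤ γ) : (h + 2 * γ) / (c + 2 * γ) ≤ 3 := by
  rw [abs_le] at hh hc
  rw [div_le_iff₀ (by linarith)]
  linarith

lemma rescaled_curvature_bounds {γ h c B : ℝ} (hγ : 0 < γ) (hh : |h| ≤ γ) (hc : |c| ≤ γ)
    (hB : (h + 2 * γ) / (c + 2 * γ) ≤ B) (hB3 : B ≤ 3) :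
    h ≤ B * (c + 2 * γ) - 2 * γ ∧ B * (c + 2 * γ) - 2 * γ ≤ h + 8 * γ := by
  rw [abs_le] at hh hc
  rw [div_le_iff₀ (by linarith)] at hB
  constructor
  · linarith
  · nlinarith

lemma rate_step_coeffs_le {K : ℝ} (hK : 2 ≤ K) :
    (1 - 3 / (K + 1)) * (81 / 4 / K) + (3 / (K + 1)) ^ 2 ≤ 81 / 4 / (K + 1) ∧
    (1 - 3 / (K + 1)) * (27 / K ^ 2) + (3 / (K + 1)) ^ 3 ≤ 27 / (K + 1) ^ 2 ∧
    (1 - 3 / (K + 1)) * (4 / K ^ 3) ≤ 4 / (K + 1) ^ 3 := by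
  have hK0 : 0 < K := by linarith
  have ht : 1 - 3 / (K + 1) = (K - 2) / (K + 1) := by field_simp; ring
  rw [ht]
  refine ⟨?_, ?_, ?_⟩
  · rw [div_mul_div_comm, div_pow, div_add_div _ _ (by positivity) (by positivity),
      div_le_div_iff₀ (by positivity) (by positivity)]
    nlinarith
  · rw [div_mul_div_comm, div_pow, div_add_div _ _ (by positivity) (by positivity),
      div_le_div_iff₀ (by positivity) (by positivity)]
    nlinarith
  · rw [div_mul_div_comm, div_le_div_iff₀ (by positivity) (by positivity)]
    nlinarith

lemma le_rate_of_forall_le_one_sub_mul {A C : ℝ} (hA : 0 ≤ A) (hC : 0 ≤ C) {δ : ℕ → ℝ}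
    (hδ : ∀ k, 0 ≤ δ k)
    (hstep : ∀ k, ∀ t ∈ Icc (0 : ℝ) 1, δ (k + 1) ≤ (1 - t) * δ k + A * t ^ 2 + C * t ^ 3) :
    ∀ k : ℕ, 1 ≤ k → δ k ≤ 81 / 4 * A / k + 27 * C / (k : ℝ) ^ 2 + 4 * δ 0 / (k : ℝ) ^ 3 := by
  have hfull : ∀ k, δ (k + 1) ≤ A + C := fun k => by simpa using hstep k 1 (by simp)
  refine Nat.le_induction ?_ fun k hk ih => ?_
  · have := hfull 0
    have := hδ 0
    norm_num
    linarith
  obtain rfl | hk2 : k = 1 ∨ 2 ≤ k := by omega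
  · have := hfull 1
    have := hδ 0
    norm_num
    linarith
  have hK : (2 : ℝ) ≤ k := by exact_mod_cast hk2
  set K : ℝ := (k : ℝ)
  obtain ⟨q₁, q₂, q₃⟩ := rate_step_coeffs_le hK
  have ht : 3 / (K + 1) ∈ Icc (0 : ℝ) 1 :=
    ⟨by positivity, (div_le_one (by linarith)).2 (by linarith)⟩
  have ht' : 0 ≤ 1 - 3 / (K + 1) := by linarith [ht.2]
  push_cast
  calc δ (k + 1) ≤ (1 - 3 / (K + 1)) * δ k + A * (3 / (K + 1)) ^ 2 + C * (3 / (K + 1)) ^ 3 :=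
        hstep k _ ht
    _ ≤ (1 - 3 / (K + 1)) * (81 / 4 * A / K + 27 * C / K ^ 2 + 4 * δ 0 / K ^ 3)
        + A * (3 / (K + 1)) ^ 2 + C * (3 / (K + 1)) ^ 3 := by gcongr
    _ = A * ((1 - 3 / (K + 1)) * (81 / 4 / K) + (3 / (K + 1)) ^ 2)
        + C * ((1 - 3 / (K + 1)) * (27 / K ^ 2) + (3 / (K + 1)) ^ 3)
        + δ 0 * ((1 - 3 / (K + 1)) * (4 / K ^ 3)) := by ring
    _ ≤ A * (81 / 4 / (K + 1)) + C * (27 / (K + 1) ^ 2) + δ 0 * (4 / (K + 1) ^ 3) := by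
        gcongr
        exact hδ 0
    _ = 81 / 4 * A / (K + 1) + 27 * C / (K + 1) ^ 2 + 4 * δ 0 / (K + 1) ^ 3 := by ring

theorem cnl_global_convex_general
    {n m d : ℕ}
    (ν γ lam R : ℝ) (hν : 0 ≤ ν) (hγ : 0 < γ) (hR : 0 ≤ R)
    (a : Fin n → Fin m → Euc d) (φ : Fin n → Fin m → ℝ → ℝ)
    (φ'' : Fin n → Fin m → ℝ → ℝ) (hφ'' : ∀ i j, φ'' i j = deriv (deriv (φ i j)))
    (hsmooth : ∀ i j, ContDiff ℝ 2 (φ i j))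
    (hbdd : ∀ i j t, |φ'' i j t| ≤ γ)
    (hlip : ∀ i j s t, |φ'' i j s - φ'' i j t| ≤ ν * |s - t|)
    (hRub : ∀ i j, ‖a i j‖ ≤ R)
    (P : Euc d → ℝ)
    (hP : ∀ y, P y = ((n : ℝ) * m)⁻¹ * (∑ i, ∑ j, φ i j (rinner (a i j) y))
        + lam / 2 * ‖y‖ ^ 2)
    (hPconv : ConvexOn ℝ Set.univ P)
    (xstar : Euc d) (hmin : ∀ y, P xstar ≤ P y)
    (x : ℕ → Euc d) (c : Fin n → Fin m → ℕ → ℝ)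
    (hcγ : ∀ i j k, |c i j k| ≤ γ)
    (B : ℕ → ℝ)
    (hBub : ∀ k i j,
        (φ'' i j (rinner (a i j) (x k)) + 2 * γ) / (c i j k + 2 * γ) ≤ B k)
    (hBmem : ∀ k, ∃ i j,
        B k = (φ'' i j (rinner (a i j) (x k)) + 2 * γ) / (c i j k + 2 * γ))
    (hstep : ∀ k, ∀ s : Euc d,
        cubicModel a (gradient P (x k)) (fun i j => B k * (c i j k + 2 * γ) - 2 * γ)
            lam (ν * R ^ 3) (x (k + 1) - x k) ≤
          cubicModel a (gradient P (x k)) (fun i j => B k * (c i j k + 2 * γ) - 2 * γ)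
            lam (ν * R ^ 3) s)
    (Rx : ℝ)
    (hRx : Rx = sSup {r : ℝ | ∃ y : Euc d, P y ≤ P (x 0) ∧ r = ‖y - xstar‖})
    (hRxBdd : BddAbove {r : ℝ | ∃ y : Euc d, P y ≤ P (x 0) ∧ r = ‖y - xstar‖}) :
    ∀ k : ℕ, 1 ≤ k →
      P (x k) - P xstar ≤ 81 * γ * R ^ 2 * Rx ^ 2 / (k : ℝ) +
        9 * (ν * R ^ 3) * Rx ^ 3 / (k : ℝ) ^ 2 +
        4 * (P (x 0) - P xstar) / (k : ℝ) ^ 3 := by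
  obtain rfl : φ'' = fun i j => deriv (deriv (φ i j)) := funext fun i => funext (hφ'' i)
  have hB3 : ∀ k, B k ≤ 3 := fun k => by
    obtain ⟨i, j, hB⟩ := hBmem k
    exact hB ▸ add_two_mul_div_add_two_mul_le_three hγ (hbdd _ _ _) (hcγ _ _ _)
  have hcurv := fun k i j =>
    rescaled_curvature_bounds hγ (hbdd i j (rinner (a i j) (x k))) (hcγ i j k) (hBub k i j) (hB3 k)
  have hnext : ∀ k s, P (x (k + 1)) ≤
      P (x k + s) + 8 * γ * R ^ 2 / 2 * ‖s‖ ^ 2 + ν * R ^ 3 / 3 * ‖s‖ ^ 3 := fun k =>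
    le_add_of_cubicModel_le hRub (by positivity)
      (abs_objective_taylor_remainder_le hν hR hsmooth hlip hRub hP (x k))
      (fun i j => (hcurv k i j).1) (fun i j => (hcurv k i j).2) (hstep k)
  have hdesc : ∀ k, P (x k) ≤ P (x 0) := fun k => by
    induction k with
    | zero => exact le_rfl
    | succ k ih => exact ((hnext k 0).trans_eq (by simp)).trans ih
  have hball : ∀ k, ‖xstar - x k‖ ≤ Rx := fun k => by
    rw [hRx, norm_sub_rev]
    exact le_csSup hRxBdd ⟨x k, hdesc k, rfl⟩
  have hRx0 : 0 ≤ Rx := (norm_nonneg _).trans (hball 0)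
  intro k hk
  have hrate := le_rate_of_forall_le_one_sub_mul (A := 4 * γ * R ^ 2 * Rx ^ 2)
    (C := ν * R ^ 3 * Rx ^ 3 / 3) (by positivity) (by positivity)
    (δ := fun k => P (x k) - P xstar)
    (fun k => sub_nonneg.2 (hmin _)) (fun k t ht =>
      (hPconv.sub_le_of_forall_le_add (by positivity) (by positivity) (hnext k) (hball k)
        ht).trans_eq (by ring)) k hk
  exact hrate.trans_eq (by ring)

/-- global sublinear convergence of CNL in the convex case (Theorem 4). -/
theorem cnl_global_convex
    {n m d : ℕ} (hn : 0 < n) (hm : 0 < m) (hd : 0 < d)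
    (ν γ lam R : ℝ) (hν : 0 ≤ ν) (hγ : 0 < γ) (hlam : 0 ≤ lam) (hR : 0 ≤ R)
    (a : Fin n → Fin m → Euc d) (φ : Fin n → Fin m → ℝ → ℝ)
    (φ'' : Fin n → Fin m → ℝ → ℝ) (hφ'' : ∀ i j, φ'' i j = deriv (deriv (φ i j)))
    (hsmooth : ∀ i j, ContDiff ℝ 2 (φ i j))
    (hbdd : ∀ i j t, |φ'' i j t| ≤ γ)
    (hlip : ∀ i j s t, |φ'' i j s - φ'' i j t| ≤ ν * |s - t|)
    (hRub : ∀ i j, ‖a i j‖ ≤ R)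
    (P : Euc d → ℝ)
    (hP : ∀ y, P y = ((n : ℝ) * m)⁻¹ * (∑ i, ∑ j, φ i j (rinner (a i j) y))
        + lam / 2 * ‖y‖ ^ 2)
    (hPconv : ConvexOn ℝ Set.univ P)
    (xstar : Euc d) (hmin : ∀ y, P xstar ≤ P y)
    (x : ℕ → Euc d) (c : Fin n → Fin m → ℕ → ℝ)
    (hcγ : ∀ i j k, |c i j k| ≤ γ)
    (B : ℕ → ℝ)
    (hBub : ∀ k i j,
        (φ'' i j (rinner (a i j) (x k)) + 2 * γ) / (c i j k + 2 * γ) ≤ B k)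
    (hBmem : ∀ k, ∃ i j,
        B k = (φ'' i j (rinner (a i j) (x k)) + 2 * γ) / (c i j k + 2 * γ))
    (hstep : ∀ k, ∀ s : Euc d,
        cubicModel a (gradient P (x k)) (fun i j => B k * (c i j k + 2 * γ) - 2 * γ)
            lam (ν * R ^ 3) (x (k + 1) - x k) ≤
          cubicModel a (gradient P (x k)) (fun i j => B k * (c i j k + 2 * γ) - 2 * γ)
            lam (ν * R ^ 3) s)
    (Rx : ℝ)
    (hRx : Rx = sSup {r : ℝ | ∃ y : Euc d, P y ≤ P (x 0) ∧ r = ‖y - xstar‖})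
    (hRxBdd : BddAbove {r : ℝ | ∃ y : Euc d, P y ≤ P (x 0) ∧ r = ‖y - xstar‖}) :
    ∀ k : ℕ, 1 ≤ k →
      P (x k) - P xstar ≤ 81 * γ * R ^ 2 * Rx ^ 2 / (k : ℝ) +
        9 * (ν * R ^ 3) * Rx ^ 3 / (k : ℝ) ^ 2 +
        4 * (P (x 0) - P xstar) / (k : ℝ) ^ 3 :=
  cnl_global_convex_general ν γ lam R hν hγ hR a φ φ'' hφ'' hsmooth hbdd hlip hRub P hP hPconv xstar
    hmin x c hcγ B hBub hBmem hstep Rx hRx hRxBdd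
end
end

section
/- (Bernoulli compressor.) Fix x ∈ ℝ^m. On a probability space, let g : Ω → ℝ^m be a random vector with E[g] = x and E‖g‖² ≤ (ω+1)‖x‖² for some ω ≥ 0, and let B : Ω → {0,1} be a Bernoulli random variable with ℙ(B = 1) = p ∈ (0, 1], independent of g. Define g_p = (B/p) · g. Then E[g_p] = x and E‖g_p‖² ≤ ((ω+1)/p) ‖x‖²; that is, g_p satisfies the compression-operator conditions with variance parameter ω_p = (ω+1)/p − 1. -/
open MeasureTheory
open scoped BigOperators

noncomputable section

/-! Since `B ∈ {0, 1}`, `(B / p)² = B / p²` and `E[B] = p`. Independence factorises both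
moments: `E[(B / p) • g] = (E[B] / p) • E[g] = x` and
`E‖(B / p) • g‖² = (E[B] / p²) E‖g‖² = E‖g‖² / p`. -/

section BernoulliScaling

open ProbabilityTheory

variable {Ω E : Type*} [MeasurableSpace Ω] {μ : Measure Ω}
  [NormedAddCommGroup E] [NormedSpace ℝ E] [MeasurableSpace E] [BorelSpace E]
  {g : Ω → E} {B : Ω → ℝ}

theorem integral_eq_measureReal_of_forall_eq_zero_or_eq_one
    (hB01 : ∀ t, B t = 0 ∨ B t = 1) (hBmeas : Measurable B) :
    ∫ t, B t ∂μ = μ.real {t | B t = 1} := by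
  have hB : B = {t | B t = 1}.indicator 1 := by
    funext t
    rcases hB01 t with h | h <;> simp [h]
  calc ∫ t, B t ∂μ = ∫ t, {t | B t = 1}.indicator 1 t ∂μ := by rw [← hB]
    _ = μ.real {t | B t = 1} := integral_indicator_one (hBmeas (measurableSet_singleton 1))

theorem ProbabilityTheory.IndepFun.integral_div_smul (hindep : IndepFun g B μ)
    (hg : AEStronglyMeasurable g μ) (hBmeas : Measurable B) (p : ℝ) :
    ∫ t, (B t / p) • g t ∂μ = ((∫ t, B t ∂μ) / p) • ∫ t, g t ∂μ := by
  have hindep' : IndepFun (fun t => B t / p) g μ :=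
    hindep.symm.comp (measurable_id.div_const p) measurable_id
  rw [hindep'.integral_fun_smul_eq_smul_integral (hBmeas.div_const p).aestronglyMeasurable
    hg, integral_div]

theorem ProbabilityTheory.IndepFun.integral_norm_div_smul_sq
    (hindep : IndepFun g B μ) (hg : AEStronglyMeasurable g μ)
    (hB01 : ∀ t, B t = 0 ∨ B t = 1) (hBmeas : Measurable B) (p : ℝ) :
    ∫ t, ‖(B t / p) • g t‖ ^ 2 ∂μ = (∫ t, B t ∂μ) / p ^ 2 * ∫ t, ‖g t‖ ^ 2 ∂μ := by
  have hsq : ∀ t, ‖(B t / p) • g t‖ ^ 2 = B t / p ^ 2 * ‖g t‖ ^ 2 := fun t => by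
    rw [norm_smul, mul_pow, Real.norm_eq_abs, sq_abs, div_pow]
    rcases hB01 t with h | h <;> simp [h]
  simp_rw [hsq]
  have hindep' : IndepFun (fun t => B t / p ^ 2) (fun t => ‖g t‖ ^ 2) μ :=
    hindep.symm.comp (measurable_id.div_const _) (measurable_norm.pow_const 2)
  rw [hindep'.integral_fun_mul_eq_mul_integral (hBmeas.div_const _).aestronglyMeasurable
    (hg.norm.pow 2), integral_div]

end BernoulliScaling

theorem bernoulli_compressor_general
    {m : ℕ} (Ω : Type*) [MeasurableSpace Ω] (ℙ : Measure Ω)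
    (x : Euc m) (ωc p : ℝ) (hp0 : 0 < p)
    (g : Ω → Euc m) (B : Ω → ℝ)
    (hgint : Integrable g ℙ)
    (hgmean : (∫ t, g t ∂ℙ) = x)
    (hgvar : (∫ t, ‖g t‖ ^ 2 ∂ℙ) ≤ (ωc + 1) * ‖x‖ ^ 2)
    (hB01 : ∀ t, B t = 0 ∨ B t = 1) (hBmeas : Measurable B)
    (hBp : ℙ {t | B t = 1} = ENNReal.ofReal p)
    (hindep : ProbabilityTheory.IndepFun g B ℙ) :
    (∫ t, (B t / p) • g t ∂ℙ) = x ∧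
      (∫ t, ‖(B t / p) • g t‖ ^ 2 ∂ℙ) ≤ (ωc + 1) / p * ‖x‖ ^ 2 := by
  have hBmean : ∫ t, B t ∂ℙ = p := by
    rw [integral_eq_measureReal_of_forall_eq_zero_or_eq_one hB01 hBmeas, measureReal_def, hBp,
      ENNReal.toReal_ofReal hp0.le]
  refine ⟨?_, ?_⟩
  · rw [hindep.integral_div_smul hgint.1 hBmeas, hBmean, div_self hp0.ne', one_smul, hgmean]
  · rw [hindep.integral_norm_div_smul_sq hgint.1 hB01 hBmeas, hBmean]
    calc p / p ^ 2 * ∫ t, ‖g t‖ ^ 2 ∂ℙ ≤ p / p ^ 2 * ((ωc + 1) * ‖x‖ ^ 2) := by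
          gcongr
      _ = (ωc + 1) / p * ‖x‖ ^ 2 := by field_simp

/-- the Bernoulli compressor is a compression operator with
variance parameter `ω_p = (ω+1)/p − 1`. -/
theorem bernoulli_compressor
    {m : ℕ} (Ω : Type*) [MeasurableSpace Ω] (ℙ : Measure Ω) [IsProbabilityMeasure ℙ]
    (x : Euc m) (ωc p : ℝ) (hωc : 0 ≤ ωc) (hp0 : 0 < p) (hp1 : p ≤ 1)
    (g : Ω → Euc m) (B : Ω → ℝ)
    (hgint : Integrable g ℙ)
    (hgsqint : Integrable (fun t => ‖g t‖ ^ 2) ℙ)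
    (hgmean : (∫ t, g t ∂ℙ) = x)
    (hgvar : (∫ t, ‖g t‖ ^ 2 ∂ℙ) ≤ (ωc + 1) * ‖x‖ ^ 2)
    (hB01 : ∀ t, B t = 0 ∨ B t = 1) (hBmeas : Measurable B)
    (hBp : ℙ {t | B t = 1} = ENNReal.ofReal p)
    (hindep : ProbabilityTheory.IndepFun g B ℙ) :
    (∫ t, (B t / p) • g t ∂ℙ) = x ∧
      (∫ t, ‖(B t / p) • g t‖ ^ 2 ∂ℙ) ≤ (ωc + 1) / p * ‖x‖ ^ 2 :=
  bernoulli_compressor_general Ω ℙ x ωc p hp0 g B hgint hgmean hgvar hB01 hBmeas hBp hindep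
end
end
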